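/- arXiv:2502.10943 — 3 statements merged into one kernel-verified Lean document; each statement's English description precedes it below -/
import Mathlib

section
/- Let Z_1,...,Z_p be i.i.d. nonnegative-square random variables with P(Z_1 = 0) = 0, let Y_i = Z_i / ||Z||_2, and let phi(s) = E[e^{-s Z_1^2}] be the Laplace transform of Z_1^2. Then for positive integers k_1,...,k_r with r <= p and k = k_1 + ... + k_r, assuming all quantities are integrable, E[Y_1^{k_1} ... Y_r^{k_r}] = (1/Gamma(k/2)) * integral over (0, infinity) of s^{k/2 - 1} * prod_{i=1}^r E[Z_i^{k_i} e^{-s Z_i^2}] * phi(s)^{p-r} ds. -/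
open MeasureTheory ProbabilityTheory Finset Set

lemma aux_gammaIntegrable {a b : ℝ} (ha : 0 < a) (hb : 0 < b) :
    IntegrableOn (fun t : ℝ => t ^ (a - 1) * Real.exp (-(b * t))) (Set.Ioi 0) := by
  have h1 : IntegrableOn (fun u : ℝ => Real.exp (-u) * u ^ (a - 1)) (Set.Ioi 0) :=
    Real.GammaIntegral_convergent ha
  have h2 : IntegrableOn (fun t : ℝ => Real.exp (-(b * t)) * (b * t) ^ (a - 1))
      (Set.Ioi 0) := by
    have := (integrableOn_Ioi_comp_mul_left_iff
      (fun u : ℝ => Real.exp (-u) * u ^ (a - 1)) 0 hb).2 (by simpa using h1)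
    simpa using this
  refine (IntegrableOn.congr_fun (h2.const_mul (b ^ (1 - a))) (fun t ht => ?_)
    measurableSet_Ioi)
  have ht' : (0:ℝ) < t := ht
  rw [Real.mul_rpow hb.le ht'.le]
  rw [show b ^ (1 - a) * (Real.exp (-(b * t)) * (b ^ (a - 1) * t ^ (a - 1)))
      = (b ^ (1 - a) * b ^ (a - 1)) * (t ^ (a - 1) * Real.exp (-(b * t))) by ring,
    ← Real.rpow_add hb]
  norm_num

lemma aux_prod_integral {Ω : Type*} [MeasurableSpace Ω] (μ : Measure Ω)
    [IsProbabilityMeasure μ] (g : ℕ → Ω → ℝ) (hg : ∀ i, Measurable (g i))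
    (hind : iIndepFun g μ)
    (hint : ∀ i, Integrable (g i) μ) (n : ℕ) :
    Integrable (fun ω => ∏ i ∈ Finset.range n, g i ω) μ ∧
    ∫ ω, ∏ i ∈ Finset.range n, g i ω ∂μ = ∏ i ∈ Finset.range n, ∫ ω, g i ω ∂μ := by
  induction n with
  | zero => simp
  | succ n ih =>
    have hIF : IndepFun (∏ j ∈ Finset.range n, g j) (g n) μ :=
      hind.indepFun_prod_range_succ hg n
    have hprod_eq : (fun ω => ∏ i ∈ Finset.range n, g i ω)
        = ∏ j ∈ Finset.range n, g j := by
      funext ω; rw [Finset.prod_apply]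
    have hint1 : Integrable (∏ j ∈ Finset.range n, g j) μ := by
      rw [← hprod_eq]; exact ih.1
    have hmul : Integrable ((∏ j ∈ Finset.range n, g j) * g n) μ :=
      hIF.integrable_mul hint1 (hint n)
    constructor
    · refine hmul.congr (Filter.Eventually.of_forall fun ω => ?_)
      simp [Finset.prod_range_succ, Finset.prod_apply]
    · have := hIF.integral_mul_eq_mul_integral hint1.aestronglyMeasurable (hint n).aestronglyMeasurable
      calc ∫ ω, ∏ i ∈ Finset.range (n+1), g i ω ∂μ
          = ∫ ω, ((∏ j ∈ Finset.range n, g j) * g n) ω ∂μ := by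
            congr 1; funext ω; simp [Finset.prod_range_succ, Finset.prod_apply]
        _ = (∫ ω, (∏ j ∈ Finset.range n, g j) ω ∂μ) * ∫ ω, g n ω ∂μ := this
        _ = ∏ i ∈ Finset.range (n+1), ∫ ω, g i ω ∂μ := by
            rw [Finset.prod_range_succ, ← ih.2, ← hprod_eq]

/-- Laplace-transform representation of moments of self-normalized variables:
for i.i.d. `Z 0, ..., Z (p-1)` with `P(Z 0 = 0) = 0`, `Y i = Z i / ‖Z‖₂`,
`φ s = E[exp (-s * (Z 0)^2)]`, positive exponents `k i` for `i < r ≤ p` with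
`K = k 0 + ... + k (r-1)`, and assuming all the relevant quantities are integrable,
`E[∏ i < r, (Y i)^(k i)]
  = (1/Γ(K/2)) * ∫_{(0,∞)} s^(K/2 - 1) * ∏ i < r, E[(Z i)^(k i) exp(-s (Z i)^2)] * φ(s)^(p-r) ds`. -/
theorem selfNormalized_moment_gamma_representation
    {Ω : Type*} [MeasurableSpace Ω] (μ : Measure Ω) [IsProbabilityMeasure μ]
    (p r : ℕ) (hp : 0 < p) (hrp : r ≤ p) (Z : ℕ → Ω → ℝ)
    (hmeas : ∀ i, Measurable (Z i))
    (hindep : iIndepFun Z μ)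
    (hident : ∀ i, IdentDistrib (Z i) (Z 0) μ μ)
    (hzero : μ {ω | Z 0 ω = 0} = 0)
    (Y : ℕ → Ω → ℝ)
    (hY : ∀ i ω, Y i ω = Z i ω / Real.sqrt (∑ j ∈ Finset.range p, Z j ω ^ 2))
    (φ : ℝ → ℝ) (hφ : ∀ s, φ s = ∫ ω, Real.exp (-s * (Z 0 ω) ^ 2) ∂μ)
    (k : ℕ → ℕ) (hk : ∀ i < r, 0 < k i) (K : ℕ) (hK : K = ∑ i ∈ Finset.range r, k i)
    (hInt1 : Integrable (fun ω => ∏ i ∈ Finset.range r, (Y i ω) ^ k i) μ)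
    (hInt2 : ∀ s > (0:ℝ), ∀ i < r,
      Integrable (fun ω => (Z i ω) ^ k i * Real.exp (-s * (Z i ω) ^ 2)) μ)
    (hInt3 : IntegrableOn
      (fun s : ℝ => s ^ ((K : ℝ) / 2 - 1)
        * (∏ i ∈ Finset.range r, ∫ ω, (Z i ω) ^ k i * Real.exp (-s * (Z i ω) ^ 2) ∂μ)
        * (φ s) ^ (p - r)) (Ioi (0:ℝ))) :
    ∫ ω, ∏ i ∈ Finset.range r, (Y i ω) ^ k i ∂μ
      = (1 / Real.Gamma ((K : ℝ) / 2))
        * ∫ s in Ioi (0:ℝ), s ^ ((K : ℝ) / 2 - 1)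
            * (∏ i ∈ Finset.range r, ∫ ω, (Z i ω) ^ k i * Real.exp (-s * (Z i ω) ^ 2) ∂μ)
            * (φ s) ^ (p - r) := by
  rcases Nat.eq_zero_or_pos r with hr0 | hrpos
  · -- r = 0 : hInt3 is contradictory
    exfalso
    subst hr0
    have hK0 : K = 0 := by simpa using hK
    subst hK0
    simp only [Finset.range_zero, Finset.prod_empty, Nat.cast_zero, Nat.sub_zero,
      mul_one, zero_div, zero_sub] at hInt3
    -- hInt3 : IntegrableOn (fun s => s ^ (-1:ℝ) * φ s ^ p) (Ioi 0)
    obtain ⟨M, hM⟩ : ∃ M : ℕ, μ {ω | (Z 0 ω) ^ 2 ≤ (M:ℝ)} ≠ 0 := by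
      by_contra h
      push_neg at h
      have h1 : μ (⋃ n : ℕ, {ω | (Z 0 ω) ^ 2 ≤ (n:ℝ)}) = 0 := measure_iUnion_null h
      have h2 : (⋃ n : ℕ, {ω | (Z 0 ω) ^ 2 ≤ (n:ℝ)}) = Set.univ := by
        ext ω
        simp only [Set.mem_iUnion, Set.mem_setOf_eq, Set.mem_univ, iff_true]
        exact exists_nat_ge ((Z 0 ω) ^ 2)
      rw [h2, measure_univ] at h1
      exact one_ne_zero h1
    set A := {ω | (Z 0 ω) ^ 2 ≤ (M:ℝ)} with hA
    have hAmeas : MeasurableSet A := measurableSet_le ((hmeas 0).pow_const 2) measurable_const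
    have hc0 : 0 < (μ A).toReal := ENNReal.toReal_pos hM (measure_ne_top μ A)
    set ε : ℝ := (μ A).toReal * Real.exp (-(M:ℝ)) with hε_def
    have hε : 0 < ε := mul_pos hc0 (Real.exp_pos _)
    have hφlb : ∀ s ∈ Ioo (0:ℝ) 1, ε ≤ φ s := by
      intro s hs
      rw [hφ]
      have hintZ : Integrable (fun ω => Real.exp (-s * (Z 0 ω) ^ 2)) μ := by
        refine ⟨(by fun_prop : Measurable fun ω => Real.exp (-s * (Z 0 ω) ^ 2)).aestronglyMeasurable,
          HasFiniteIntegral.of_bounded (C := 1) (Filter.Eventually.of_forall fun ω => ?_)⟩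
        rw [Real.norm_eq_abs, abs_of_nonneg (Real.exp_pos _).le]
        rw [Real.exp_le_one_iff]
        nlinarith [sq_nonneg (Z 0 ω), hs.1.le]
      have hindI : Integrable (A.indicator fun _ : Ω => Real.exp (-(M:ℝ))) μ :=
        (integrable_const _).indicator hAmeas
      have hle : ∀ ω, A.indicator (fun _ => Real.exp (-(M:ℝ))) ω ≤ Real.exp (-s * (Z 0 ω) ^ 2) := by
        intro ω
        by_cases hω : ω ∈ A
        · rw [Set.indicator_of_mem hω]
          apply Real.exp_le_exp.mpr
          have h1 : (Z 0 ω) ^ 2 ≤ (M:ℝ) := hω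
          nlinarith [hs.1.le, hs.2.le, sq_nonneg (Z 0 ω)]
        · rw [Set.indicator_of_notMem hω]
          exact (Real.exp_pos _).le
      calc ε = ∫ ω, A.indicator (fun _ : Ω => Real.exp (-(M:ℝ))) ω ∂μ := by
            rw [integral_indicator_const _ hAmeas, smul_eq_mul, hε_def, measureReal_def]
        _ ≤ _ := integral_mono hindI hintZ hle
    have h3 : IntegrableOn (fun s : ℝ => ε ^ p * s ^ (-1:ℝ)) (Ioo (0:ℝ) 1) := by
      refine Integrable.mono' (hInt3.mono Ioo_subset_Ioi_self le_rfl)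
        ((by fun_prop : Measurable fun s : ℝ => ε ^ p * s ^ (-1:ℝ)).aestronglyMeasurable) ?_
      filter_upwards [ae_restrict_mem measurableSet_Ioo] with s hs
      have hs0 : (0:ℝ) < s := hs.1
      have h1 : ε ^ p ≤ φ s ^ p := pow_le_pow_left₀ hε.le (hφlb s hs) p
      have h2 : (0:ℝ) ≤ s ^ (-1:ℝ) := Real.rpow_nonneg hs0.le _
      rw [Real.norm_eq_abs, abs_of_nonneg (by positivity)]
      calc ε ^ p * s ^ (-1:ℝ) ≤ φ s ^ p * s ^ (-1:ℝ) := by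
            exact mul_le_mul_of_nonneg_right h1 h2
        _ = s ^ (-1:ℝ) * φ s ^ p := mul_comm _ _
    have h4 : IntegrableOn (fun s : ℝ => s ^ (-1:ℝ)) (Ioo (0:ℝ) 1) := by
      have h5 := h3.const_mul (ε ^ p)⁻¹
      refine IntegrableOn.congr_fun h5 (fun s hs => ?_) measurableSet_Ioo
      field_simp
    rw [intervalIntegral.integrableOn_Ioo_rpow_iff zero_lt_one] at h4
    norm_num at h4
  · -- main case : r ≥ 1
    have hKpos : 0 < K := by
      rw [hK]
      exact Finset.sum_pos (fun i hi => hk i (Finset.mem_range.mp hi))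
        ⟨0, Finset.mem_range.mpr hrpos⟩
    have hc : 0 < (K:ℝ)/2 := by positivity
    have hΓ : 0 < Real.Gamma ((K:ℝ)/2) := Real.Gamma_pos_of_pos hc
    set S : Ω → ℝ := fun ω => ∑ j ∈ Finset.range p, Z j ω ^ 2 with hSdef
    set C : Ω → ℝ := fun ω => ∏ i ∈ Finset.range r, Z i ω ^ k i with hCdef
    have hSmeas : Measurable S := Finset.measurable_sum _ (fun j _ => (hmeas j).pow_const 2)
    have hCmeas : Measurable C := Finset.measurable_prod _ (fun i _ => (hmeas i).pow_const _)
    have hSnn : ∀ ω, 0 ≤ S ω := fun ω => Finset.sum_nonneg fun j _ => sq_nonneg _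
    have haeS : ∀ᵐ ω ∂μ, 0 < S ω := by
      have h0 : ∀ᵐ ω ∂μ, ¬ (Z 0 ω = 0) := by
        rw [ae_iff]; simpa [not_not] using hzero
      filter_upwards [h0] with ω h
      calc (0:ℝ) < Z 0 ω ^ 2 := by positivity
        _ ≤ S ω := Finset.single_le_sum (f := fun j => Z j ω ^ 2)
            (fun j _ => sq_nonneg _) (Finset.mem_range.mpr hp)
    have hpoint : ∀ ω, 0 < S ω →
        ∏ i ∈ Finset.range r, Y i ω ^ k i = C ω / S ω ^ ((K:ℝ)/2) := by
      intro ω hSω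
      have hsqrtK : Real.sqrt (S ω) ^ K = S ω ^ ((K:ℝ)/2) := by
        rw [← Real.rpow_natCast (Real.sqrt (S ω)) K, Real.sqrt_eq_rpow,
          ← Real.rpow_mul (hSnn ω)]
        congr 1; ring
      calc ∏ i ∈ Finset.range r, Y i ω ^ k i
          = ∏ i ∈ Finset.range r, (Z i ω ^ k i / Real.sqrt (S ω) ^ k i) := by
            refine Finset.prod_congr rfl fun i _ => ?_
            rw [hY, div_pow, hSdef]
        _ = C ω / Real.sqrt (S ω) ^ (∑ i ∈ Finset.range r, k i) := by
            rw [Finset.prod_div_distrib, Finset.prod_pow_eq_pow_sum, hCdef]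
        _ = C ω / S ω ^ ((K:ℝ)/2) := by rw [← hK, hsqrtK]
    -- Gamma integral identity, for an arbitrary constant a
    have hGam : ∀ (a : ℝ) (ω : Ω), 0 < S ω →
        ∫ s in Ioi (0:ℝ), s ^ ((K:ℝ)/2 - 1) * a * Real.exp (-s * S ω)
          = Real.Gamma ((K:ℝ)/2) * (a / S ω ^ ((K:ℝ)/2)) := by
      intro a ω hSω
      have h1 : ∫ s in Ioi (0:ℝ), s ^ ((K:ℝ)/2 - 1) * Real.exp (-(S ω * s))
          = (1 / S ω) ^ ((K:ℝ)/2) * Real.Gamma ((K:ℝ)/2) :=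
        Real.integral_rpow_mul_exp_neg_mul_Ioi hc hSω
      calc ∫ s in Ioi (0:ℝ), s ^ ((K:ℝ)/2 - 1) * a * Real.exp (-s * S ω)
          = ∫ s in Ioi (0:ℝ), a * (s ^ ((K:ℝ)/2 - 1) * Real.exp (-(S ω * s))) := by
            congr 1; funext s; rw [mul_comm (S ω) s, neg_mul]; ring
        _ = a * ((1 / S ω) ^ ((K:ℝ)/2) * Real.Gamma ((K:ℝ)/2)) := by
            rw [integral_const_mul, h1]
        _ = Real.Gamma ((K:ℝ)/2) * (a / S ω ^ ((K:ℝ)/2)) := by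
            rw [one_div, Real.inv_rpow (hSnn ω)]
            field_simp
    -- sectionwise integrability
    have hsec : ∀ (a : ℝ) (ω : Ω), 0 < S ω → IntegrableOn
        (fun s : ℝ => s ^ ((K:ℝ)/2 - 1) * a * Real.exp (-s * S ω)) (Ioi 0) := by
      intro a ω hSω
      refine IntegrableOn.congr_fun ((aux_gammaIntegrable hc hSω).const_mul a)
        (fun s _ => ?_) measurableSet_Ioi
      rw [mul_comm (S ω) s, neg_mul]; ring
    -- joint measurability
    have hFm : Measurable (fun q : Ω × ℝ =>
        q.2 ^ ((K:ℝ)/2 - 1) * C q.1 * Real.exp (-q.2 * S q.1)) := by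
      have m1 : Measurable fun q : Ω × ℝ => q.2 ^ ((K:ℝ)/2 - 1) := by fun_prop
      have m2 : Measurable fun q : Ω × ℝ => C q.1 := hCmeas.comp measurable_fst
      have m3 : Measurable fun q : Ω × ℝ => Real.exp (-q.2 * S q.1) :=
        Real.measurable_exp.comp ((measurable_snd.neg).mul (hSmeas.comp measurable_fst))
      exact (m1.mul m2).mul m3
    -- integrability on the product space
    have hFint : Integrable (fun q : Ω × ℝ =>
        q.2 ^ ((K:ℝ)/2 - 1) * C q.1 * Real.exp (-q.2 * S q.1))
        (μ.prod ((volume : Measure ℝ).restrict (Ioi 0))) := by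
      rw [integrable_prod_iff hFm.aestronglyMeasurable]
      constructor
      · filter_upwards [haeS] with ω hSω
        exact hsec (C ω) ω hSω
      · have heq : (fun ω => ∫ s in Ioi (0:ℝ),
            ‖s ^ ((K:ℝ)/2 - 1) * C ω * Real.exp (-s * S ω)‖)
            =ᵐ[μ] fun ω => Real.Gamma ((K:ℝ)/2)
              * |∏ i ∈ Finset.range r, Y i ω ^ k i| := by
          filter_upwards [haeS] with ω hSω
          have h1 : ∫ s in Ioi (0:ℝ), ‖s ^ ((K:ℝ)/2 - 1) * C ω * Real.exp (-s * S ω)‖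
              = ∫ s in Ioi (0:ℝ), s ^ ((K:ℝ)/2 - 1) * |C ω| * Real.exp (-s * S ω) := by
            refine setIntegral_congr_fun measurableSet_Ioi (fun s hs => ?_)
            rw [Real.norm_eq_abs, abs_mul, abs_mul,
              abs_of_nonneg (Real.rpow_nonneg (le_of_lt hs) _),
              abs_of_nonneg (Real.exp_pos _).le]
          rw [h1, hGam (|C ω|) ω hSω, hpoint ω hSω, abs_div,
            abs_of_nonneg (Real.rpow_nonneg (hSnn ω) _)]
        exact ((hInt1.abs.const_mul _).congr heq.symm)
    -- inner factorization for fixed s > 0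
    have hinner : ∀ s ∈ Ioi (0:ℝ),
        ∫ ω, s ^ ((K:ℝ)/2 - 1) * C ω * Real.exp (-s * S ω) ∂μ
          = s ^ ((K:ℝ)/2 - 1)
            * (∏ i ∈ Finset.range r, ∫ ω, Z i ω ^ k i * Real.exp (-s * Z i ω ^ 2) ∂μ)
            * (φ s) ^ (p - r) := by
      intro s hs
      have hs' : (0:ℝ) < s := hs
      set f : ℕ → ℝ → ℝ := fun i x =>
        if i < r then x ^ k i * Real.exp (-s * x ^ 2) else Real.exp (-s * x ^ 2) with hfdef
      set g : ℕ → Ω → ℝ := fun i => f i ∘ Z i with hgdef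
      have hfmeas : ∀ i, Measurable (f i) := by
        intro i
        by_cases h : i < r <;> simp only [hfdef, h, if_true, if_false] <;> fun_prop
      have hgind : iIndepFun g μ := hindep.comp f hfmeas
      have hgmeas : ∀ i, Measurable (g i) := fun i => (hfmeas i).comp (hmeas i)
      have hgint : ∀ i, Integrable (g i) μ := by
        intro i
        by_cases h : i < r
        · have := hInt2 s hs' i h
          refine this.congr (Filter.Eventually.of_forall fun ω => ?_)
          simp [hgdef, hfdef, h, Function.comp]
        · refine ⟨(hgmeas i).aestronglyMeasurable,
            HasFiniteIntegral.of_bounded (C := 1) (Filter.Eventually.of_forall fun ω => ?_)⟩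
          simp only [hgdef, hfdef, h, if_false, Function.comp]
          rw [Real.norm_eq_abs, abs_of_nonneg (Real.exp_pos _).le, Real.exp_le_one_iff]
          nlinarith [sq_nonneg (Z i ω), hs'.le]
      obtain ⟨hPint, hPeq⟩ := aux_prod_integral μ g hgmeas hgind hgint p
      have hmuleq : ∀ ω, C ω * Real.exp (-s * S ω) = ∏ i ∈ Finset.range p, g i ω := by
        intro ω
        have hexp : Real.exp (-s * S ω)
            = ∏ j ∈ Finset.range p, Real.exp (-s * Z j ω ^ 2) := by
          rw [← Real.exp_sum]
          congr 1
          rw [hSdef]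
          simp only
          rw [Finset.mul_sum]
        rw [hexp, hCdef]
        rw [← Finset.prod_range_mul_prod_Ico (fun j => Real.exp (-s * Z j ω ^ 2)) hrp,
          ← mul_assoc, ← Finset.prod_range_mul_prod_Ico (fun j => g j ω) hrp]
        congr 1
        · rw [← Finset.prod_mul_distrib]
          refine Finset.prod_congr rfl fun i hi => ?_
          simp [hgdef, hfdef, Finset.mem_range.mp hi, Function.comp]
        · refine Finset.prod_congr rfl fun i hi => ?_
          simp [hgdef, hfdef, Nat.not_lt.mpr (Finset.mem_Ico.mp hi).1, Function.comp]
      have htail : ∀ i : ℕ, ∫ ω, Real.exp (-s * Z i ω ^ 2) ∂μ = φ s := by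
        intro i
        rw [hφ]
        exact ((hident i).comp
          (show Measurable fun x : ℝ => Real.exp (-s * x ^ 2) by fun_prop)).integral_eq
      calc ∫ ω, s ^ ((K:ℝ)/2 - 1) * C ω * Real.exp (-s * S ω) ∂μ
          = ∫ ω, s ^ ((K:ℝ)/2 - 1) * ∏ i ∈ Finset.range p, g i ω ∂μ := by
            congr 1; funext ω; rw [mul_assoc, hmuleq ω]
        _ = s ^ ((K:ℝ)/2 - 1) * ∫ ω, ∏ i ∈ Finset.range p, g i ω ∂μ :=
            integral_const_mul _ _
        _ = s ^ ((K:ℝ)/2 - 1) * ∏ i ∈ Finset.range p, ∫ ω, g i ω ∂μ := by rw [hPeq]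
        _ = s ^ ((K:ℝ)/2 - 1)
            * ((∏ i ∈ Finset.range r, ∫ ω, Z i ω ^ k i * Real.exp (-s * Z i ω ^ 2) ∂μ)
              * (φ s) ^ (p - r)) := by
            have hA : ∏ i ∈ Finset.range r, ∫ ω, g i ω ∂μ
                = ∏ i ∈ Finset.range r, ∫ ω, Z i ω ^ k i * Real.exp (-s * Z i ω ^ 2) ∂μ := by
              refine Finset.prod_congr rfl fun i hi => ?_
              congr 1; funext ω
              simp [hgdef, hfdef, Finset.mem_range.mp hi, Function.comp]
            have hB : ∏ i ∈ Finset.Ico r p, ∫ ω, g i ω ∂μ = (φ s) ^ (p - r) := by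
              calc ∏ i ∈ Finset.Ico r p, ∫ ω, g i ω ∂μ
                  = ∏ _i ∈ Finset.Ico r p, φ s := by
                    refine Finset.prod_congr rfl fun i hi => ?_
                    rw [← htail i]
                    congr 1; funext ω
                    simp [hgdef, hfdef, Nat.not_lt.mpr (Finset.mem_Ico.mp hi).1,
                      Function.comp]
                _ = (φ s) ^ (p - r) := by rw [Finset.prod_const, Nat.card_Ico]
            rw [← Finset.prod_range_mul_prod_Ico (fun i => ∫ ω, g i ω ∂μ) hrp, hA, hB]
        _ = _ := (mul_assoc _ _ _).symm
    -- assemble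
    have hae1 : (fun ω => ∏ i ∈ Finset.range r, Y i ω ^ k i)
        =ᵐ[μ] fun ω => (Real.Gamma ((K:ℝ)/2))⁻¹
          * ∫ s in Ioi (0:ℝ), s ^ ((K:ℝ)/2 - 1) * C ω * Real.exp (-s * S ω) ∂(volume) := by
      filter_upwards [haeS] with ω hSω
      rw [hGam (C ω) ω hSω, hpoint ω hSω, ← mul_assoc, inv_mul_cancel₀ hΓ.ne', one_mul]
    calc ∫ ω, ∏ i ∈ Finset.range r, Y i ω ^ k i ∂μ
        = ∫ ω, ((Real.Gamma ((K:ℝ)/2))⁻¹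
            * ∫ s in Ioi (0:ℝ), s ^ ((K:ℝ)/2 - 1) * C ω * Real.exp (-s * S ω) ∂(volume)) ∂μ :=
          integral_congr_ae hae1
      _ = (Real.Gamma ((K:ℝ)/2))⁻¹
          * ∫ ω, (∫ s in Ioi (0:ℝ), s ^ ((K:ℝ)/2 - 1) * C ω * Real.exp (-s * S ω) ∂(volume)) ∂μ :=
          integral_const_mul _ _
      _ = (Real.Gamma ((K:ℝ)/2))⁻¹
          * ∫ s in Ioi (0:ℝ), ∫ ω, s ^ ((K:ℝ)/2 - 1) * C ω * Real.exp (-s * S ω) ∂μ := by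
          rw [integral_integral_swap hFint]
      _ = (Real.Gamma ((K:ℝ)/2))⁻¹
          * ∫ s in Ioi (0:ℝ), s ^ ((K:ℝ)/2 - 1)
            * (∏ i ∈ Finset.range r, ∫ ω, Z i ω ^ k i * Real.exp (-s * Z i ω ^ 2) ∂μ)
            * (φ s) ^ (p - r) := by
          congr 1
          exact setIntegral_congr_fun measurableSet_Ioi hinner
      _ = _ := by rw [one_div]
end

section
/- Let A be a p x p complex matrix with operator norm ||A||, and let 1_p be the all-ones vector. Then |sum over i != j of a_{ij}^k| <= 2 p ||A||^k for every positive integer k; more precisely, sum_{i != j} a_{ij}^k = 1_p^T A^{(k)} 1_p - tr(A^{(k)}) where A^{(k)} denotes the k-fold Hadamard (entrywise) power of A, and both terms are O(p)||A||^k. -/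
open Finset Matrix

/-- The `ℓ²`-operator (spectral) norm of a complex square matrix. -/
noncomputable def l2OpNorm {p : ℕ} (A : Matrix (Fin p) (Fin p) ℂ) : ℝ :=
  ‖Matrix.toEuclideanCLM (𝕜 := ℂ) A‖


lemma mulVec_l2_le {p : ℕ} (A : Matrix (Fin p) (Fin p) ℂ) (x : Fin p → ℂ) :
    Real.sqrt (∑ i, ‖(A *ᵥ x) i‖ ^ 2)
      ≤ l2OpNorm A * Real.sqrt (∑ i, ‖x i‖ ^ 2) := by
  have h := (Matrix.toEuclideanCLM (𝕜 := ℂ) A).le_opNorm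
    (WithLp.toLp 2 x)
  rw [Matrix.toEuclideanCLM_toLp] at h
  have e1 : ‖WithLp.toLp 2 x‖
      = Real.sqrt (∑ i, ‖x i‖ ^ 2) := by
    rw [EuclideanSpace.norm_eq]
  have e2 : ‖WithLp.toLp 2 (A *ᵥ x)‖
      = Real.sqrt (∑ i, ‖(A *ᵥ x) i‖ ^ 2) := by
    rw [EuclideanSpace.norm_eq]
  rw [e1, e2] at h; exact h

/-- squared column bound : `∑_i |a_{ij}|² ≤ ‖A‖²`. -/
lemma col_sq_le {p : ℕ} (A : Matrix (Fin p) (Fin p) ℂ) (j : Fin p) :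
    ∑ i, ‖A i j‖ ^ 2 ≤ l2OpNorm A ^ 2 := by
  have h := mulVec_l2_le A (Pi.single j 1)
  have hx : ∑ i, ‖(Pi.single j (1:ℂ) : Fin p → ℂ) i‖ ^ 2 = 1 := by
    simp [Pi.single_apply, apply_ite (fun z : ℂ => ‖z‖)]
  have hm : ∀ i, (A *ᵥ Pi.single j (1:ℂ)) i = A i j := by
    intro i; rw [Matrix.mulVec_single]; exact mul_one _
  simp only [hm, hx, Real.sqrt_one, mul_one] at h
  have hnn : (0:ℝ) ≤ ∑ i, ‖A i j‖ ^ 2 :=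
    Finset.sum_nonneg fun _ _ => sq_nonneg _
  calc ∑ i, ‖A i j‖ ^ 2
      = Real.sqrt (∑ i, ‖A i j‖ ^ 2) ^ 2 := (Real.sq_sqrt hnn).symm
    _ ≤ l2OpNorm A ^ 2 := by
        apply pow_le_pow_left₀ (Real.sqrt_nonneg _) h

/-- entry bound : `|a_{ij}| ≤ ‖A‖`. -/
lemma entry_le {p : ℕ} (A : Matrix (Fin p) (Fin p) ℂ) (i j : Fin p) :
    ‖A i j‖ ≤ l2OpNorm A := by
  have h : ‖A i j‖ ^ 2 ≤ l2OpNorm A ^ 2 := by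
    refine le_trans ?_ (col_sq_le A j)
    exact Finset.single_le_sum (f := fun i => ‖A i j‖ ^ 2)
      (fun _ _ => sq_nonneg _) (Finset.mem_univ i)
  calc ‖A i j‖ = Real.sqrt (‖A i j‖ ^ 2) :=
        (Real.sqrt_sq (norm_nonneg _)).symm
    _ ≤ Real.sqrt (l2OpNorm A ^ 2) := Real.sqrt_le_sqrt h
    _ = l2OpNorm A := Real.sqrt_sq (norm_nonneg _)

lemma quad_le {p : ℕ} (A : Matrix (Fin p) (Fin p) ℂ) :
    ‖∑ i, ∑ j, A i j‖ ≤ p * l2OpNorm A := by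
  set N := l2OpNorm A with hNdef
  have hN : 0 ≤ N := norm_nonneg _
  set v := A *ᵥ (fun _ => (1:ℂ)) with hv
  have hvsum : ∑ i, ∑ j, A i j = ∑ i, v i := by
    simp [hv, Matrix.mulVec, dotProduct]
  -- ℓ² bound on v
  have h1 : ∑ i : Fin p, ‖(1:ℂ)‖ ^ 2 = (p:ℝ) := by simp
  have hv2 : ∑ i, ‖v i‖ ^ 2 ≤ N ^ 2 * p := by
    have h := mulVec_l2_le A (fun _ => (1:ℂ))
    rw [h1] at h
    have hnn : (0:ℝ) ≤ ∑ i, ‖v i‖ ^ 2 :=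
      Finset.sum_nonneg fun _ _ => sq_nonneg _
    calc ∑ i, ‖v i‖ ^ 2
        = Real.sqrt (∑ i, ‖v i‖ ^ 2) ^ 2 := (Real.sq_sqrt hnn).symm
      _ ≤ (N * Real.sqrt p) ^ 2 := by
          apply pow_le_pow_left₀ (Real.sqrt_nonneg _) h
      _ = N ^ 2 * p := by
          rw [mul_pow, Real.sq_sqrt (Nat.cast_nonneg p)]
  -- Cauchy–Schwarz
  have hcs : (∑ i, ‖v i‖) ^ 2 ≤ (p:ℝ) * ∑ i, ‖v i‖ ^ 2 := by
    have := Finset.sum_mul_sq_le_sq_mul_sq Finset.univ (fun _ : Fin p => (1:ℝ))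
      (fun i => ‖v i‖)
    simpa using this
  have habs : ‖∑ i, v i‖ ≤ ∑ i, ‖v i‖ :=
    norm_sum_le _ _
  have hfin : ∑ i, ‖v i‖ ≤ p * N := by
    have hnn : (0:ℝ) ≤ ∑ i, ‖v i‖ :=
      Finset.sum_nonneg fun _ _ => norm_nonneg _
    have h2 : (∑ i, ‖v i‖) ^ 2 ≤ (p * N) ^ 2 := by
      calc (∑ i, ‖v i‖) ^ 2 ≤ (p:ℝ) * ∑ i, ‖v i‖ ^ 2 := hcs
        _ ≤ (p:ℝ) * (N ^ 2 * p) := by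
            exact mul_le_mul_of_nonneg_left hv2 (Nat.cast_nonneg p)
        _ = (p * N) ^ 2 := by ring
    calc ∑ i, ‖v i‖ = Real.sqrt ((∑ i, ‖v i‖) ^ 2) :=
          (Real.sqrt_sq hnn).symm
      _ ≤ Real.sqrt ((p * N) ^ 2) := Real.sqrt_le_sqrt h2
      _ = p * N := Real.sqrt_sq (by positivity)
  rw [hvsum]
  exact habs.trans hfin

/-- For a `p × p` complex matrix `A` with operator norm `‖A‖` and all-ones vector `1`,
`∑_{i ≠ j} a_{ij}^k = 1ᵀ A^{(k)} 1 - tr (A^{(k)})` where `A^{(k)}` is the entrywise `k`-th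
power, and `|∑_{i ≠ j} a_{ij}^k| ≤ 2 p ‖A‖^k` for every positive integer `k`. -/
theorem offdiag_hadamard_power_sum (p k : ℕ) (hk : 0 < k)
    (A : Matrix (Fin p) (Fin p) ℂ) :
    (∑ x ∈ Finset.univ.offDiag, A x.1 x.2 ^ k)
        = dotProduct (fun _ => (1 : ℂ))
            ((Matrix.of fun i j => A i j ^ k) *ᵥ fun _ => (1 : ℂ))
          - Matrix.trace (Matrix.of fun i j => A i j ^ k)
      ∧ ‖(∑ x ∈ Finset.univ.offDiag, A x.1 x.2 ^ k)‖
          ≤ 2 * p * (l2OpNorm A) ^ k := by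
  classical
  set N := l2OpNorm A with hNdef
  have hN : 0 ≤ N := norm_nonneg _
  -- the splitting identity
  have hdot : dotProduct (fun _ => (1 : ℂ))
      ((Matrix.of fun i j => A i j ^ k) *ᵥ fun _ => (1 : ℂ))
      = ∑ i, ∑ j, A i j ^ k := by
    simp [dotProduct, Matrix.mulVec]
  have htr : Matrix.trace (Matrix.of fun i j => A i j ^ k) = ∑ i, A i i ^ k := by
    simp [Matrix.trace, Matrix.diag]
  have hsplit : (∑ i, ∑ j, A i j ^ k)
      = (∑ i, A i i ^ k) + ∑ x ∈ Finset.univ.offDiag, A x.1 x.2 ^ k := by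
    rw [← Finset.sum_product']
    rw [← Finset.diag_union_offDiag (Finset.univ : Finset (Fin p)),
      Finset.sum_union (Finset.disjoint_diag_offDiag _), Finset.sum_diag]
  have heq : (∑ x ∈ Finset.univ.offDiag, A x.1 x.2 ^ k)
      = dotProduct (fun _ => (1 : ℂ))
          ((Matrix.of fun i j => A i j ^ k) *ᵥ fun _ => (1 : ℂ))
        - Matrix.trace (Matrix.of fun i j => A i j ^ k) := by
    rw [hdot, htr, hsplit]; ring
  refine ⟨heq, ?_⟩
  -- trace bound
  have htrb : ‖∑ i, A i i ^ k‖ ≤ p * N ^ k := by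
    calc ‖∑ i, A i i ^ k‖ ≤ ∑ i, ‖A i i ^ k‖ :=
          norm_sum_le _ _
      _ ≤ ∑ _i : Fin p, N ^ k := by
          refine Finset.sum_le_sum fun i _ => ?_
          rw [norm_pow]
          exact pow_le_pow_left₀ (norm_nonneg _) (entry_le A i i) k
      _ = p * N ^ k := by simp [mul_comm]
  rcases eq_or_lt_of_le (Nat.succ_le_of_lt hk) with hk1 | hk2
  · -- k = 1
    have hk1 : k = 1 := hk1.symm
    subst hk1
    rw [heq, hdot, htr]
    have hq : ‖∑ i, ∑ j, A i j ^ 1‖ ≤ p * N ^ 1 := by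
      simpa using quad_le A
    calc ‖(∑ i, ∑ j, A i j ^ 1) - ∑ i, A i i ^ 1‖
        ≤ ‖∑ i, ∑ j, A i j ^ 1‖ + ‖∑ i, A i i ^ 1‖ :=
          norm_sub_le _ _
      _ ≤ p * N ^ 1 + p * N ^ 1 := add_le_add hq htrb
      _ = 2 * p * N ^ 1 := by ring
  · -- k ≥ 2
    have hk2 : 2 ≤ k := hk2
    have hterm : ∀ i j : Fin p,
        ‖A i j‖ ^ k ≤ N ^ (k - 2) * ‖A i j‖ ^ 2 := by
      intro i j
      have : ‖A i j‖ ^ k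
          = ‖A i j‖ ^ (k - 2) * ‖A i j‖ ^ 2 := by
        rw [← pow_add, Nat.sub_add_cancel hk2]
      rw [this]
      exact mul_le_mul_of_nonneg_right
        (pow_le_pow_left₀ (norm_nonneg _) (entry_le A i j) _)
        (sq_nonneg _)
    calc ‖∑ x ∈ Finset.univ.offDiag, A x.1 x.2 ^ k‖
        ≤ ∑ x ∈ Finset.univ.offDiag, ‖A x.1 x.2 ^ k‖ :=
          norm_sum_le _ _
      _ ≤ ∑ x ∈ (Finset.univ : Finset (Fin p × Fin p)), ‖A x.1 x.2 ^ k‖ :=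
          Finset.sum_le_sum_of_subset_of_nonneg (Finset.subset_univ _)
            (fun _ _ _ => norm_nonneg _)
      _ = ∑ i, ∑ j, ‖A i j‖ ^ k := by
          rw [Fintype.sum_prod_type]
          simp [map_pow]
      _ ≤ ∑ i, ∑ j, N ^ (k - 2) * ‖A i j‖ ^ 2 :=
          Finset.sum_le_sum fun i _ => Finset.sum_le_sum fun j _ => hterm i j
      _ = N ^ (k - 2) * ∑ j, ∑ i, ‖A i j‖ ^ 2 := by
          rw [Finset.sum_comm]
          rw [Finset.mul_sum]
          exact Finset.sum_congr rfl fun j _ => (Finset.mul_sum _ _ _).symm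
      _ ≤ N ^ (k - 2) * ∑ _j : Fin p, N ^ 2 := by
          refine mul_le_mul_of_nonneg_left ?_ (pow_nonneg hN _)
          exact Finset.sum_le_sum fun j _ => col_sq_le A j
      _ = p * N ^ k := by
          rw [Finset.sum_const, Finset.card_univ, Fintype.card_fin, nsmul_eq_mul]
          rw [← mul_assoc, mul_comm (N ^ (k-2)) (p:ℝ), mul_assoc, ← pow_add,
            Nat.sub_add_cancel hk2]
      _ ≤ 2 * p * N ^ k := by
          have : (0:ℝ) ≤ p * N ^ k := by positivity
          linarith
end

section
/- Let Z_1,...,Z_p be i.i.d. centered random variables with P(Z_1 = 0) = 0 and E|Z_1|^{2m+3} < infinity, and set Y_i = Z_i/||Z||_2. Suppose that for fixed r and all exponent vectors (1, k_2,...,k_r) with k_2 + ... + k_r odd summing with 1 to an even number, E[Y_1 Y_2^{k_2} ... Y_r^{k_r}] = o(p^{-r}) as p -> infinity (Giné's bound), and suppose inductively E[Y_1^{2m+1} Y_2^{k_2} ... Y_r^{k_r}] = o(p^{-r}) and E[Y_1^{2m+1} Y_2^{k_2} ... Y_r^{k_r} Y_{r+1}^2] = o(p^{-(r+1)}) uniformly.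 Then E[Y_1^{2m+3} Y_2^{k_2} ... Y_r^{k_r}] = o(p^{-r}). -/
open MeasureTheory ProbabilityTheory Finset Filter

/-- The law of a vector of distinct coordinates of an i.i.d. sequence is the product measure. -/
lemma aux_law_iid {Ω : Type*} [MeasurableSpace Ω] (μ : Measure Ω) [IsProbabilityMeasure μ]
    (Z : ℕ → Ω → ℝ) (hmeas : ∀ i, Measurable (Z i))
    (hindep : iIndepFun Z μ)
    (hident : ∀ i, IdentDistrib (Z i) (Z 0) μ μ)
    (p : ℕ) (g : ℕ → ℕ) (hg : Function.Injective g) :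
    μ.map (fun ω (i : Fin p) => Z (g i) ω) = Measure.pi (fun _ : Fin p => μ.map (Z 0)) := by
  classical
  have hprob : IsProbabilityMeasure (μ.map (Z 0)) :=
    Measure.isProbabilityMeasure_map (hmeas 0).aemeasurable
  refine (Measure.pi_eq fun t ht => ?_).symm
  have hV : Measurable fun ω (i : Fin p) => Z (g i) ω :=
    measurable_pi_iff.mpr fun i => hmeas _
  rw [Measure.map_apply hV (MeasurableSet.univ_pi ht)]
  set t' : ℕ → Set ℝ := fun n => ⋂ (i : Fin p) (_ : g (i : ℕ) = n), t i with ht'def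
  have ht'g : ∀ i : Fin p, t' (g i) = t i := by
    intro i
    apply Set.Subset.antisymm
    · intro x hx
      exact Set.mem_iInter₂.1 hx i rfl
    · intro x hx
      refine Set.mem_iInter₂.2 fun i' hi' => ?_
      have : i' = i := Fin.val_injective (hg hi')
      rw [this]; exact hx
  have ht'meas : ∀ n, MeasurableSet (t' n) :=
    fun n => MeasurableSet.iInter fun i => MeasurableSet.iInter fun _ => ht i
  have hpre : (fun ω (i : Fin p) => Z (g i) ω) ⁻¹' (Set.univ.pi t)
      = ⋂ n ∈ Finset.image (fun i : Fin p => g (i : ℕ)) Finset.univ, Z n ⁻¹' t' n := by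
    ext ω
    simp only [Set.mem_preimage, Set.mem_univ_pi, Set.mem_iInter₂]
    constructor
    · intro h n hn
      rcases Finset.mem_image.1 hn with ⟨i, -, rfl⟩
      show ω ∈ Z (g i) ⁻¹' t' (g i)
      rw [ht'g]
      exact h i
    · intro h i
      have := h (g i) (Finset.mem_image.2 ⟨i, Finset.mem_univ i, rfl⟩)
      rwa [ht'g] at this
  rw [hpre, hindep.meas_biInter (fun n _ => ⟨t' n, ht'meas n, rfl⟩)]
  rw [Finset.prod_image (fun i _ j _ h => Fin.val_injective (hg h))]
  refine Finset.prod_congr rfl fun i _ => ?_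
  rw [ht'g, ← (hident (g i)).map_eq, Measure.map_apply (hmeas _) (ht i)]

lemma aux_exch {Ω : Type*} [MeasurableSpace Ω] (μ : Measure Ω) [IsProbabilityMeasure μ]
    (Z : ℕ → Ω → ℝ) (hmeas : ∀ i, Measurable (Z i))
    (hindep : iIndepFun Z μ)
    (hident : ∀ i, IdentDistrib (Z i) (Z 0) μ μ)
    (Y : ℕ → ℕ → Ω → ℝ)
    (hY : ∀ p i ω, Y p i ω = Z i ω / Real.sqrt (∑ j ∈ Finset.range p, Z j ω ^ 2))
    (p r : ℕ) (hrp : r < p) (κ : ℕ → ℕ) (j : ℕ) (hrj : r ≤ j) (hjp : j < p) :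
    ∫ ω, (∏ i ∈ Finset.range r, Y p i ω ^ κ i) * Y p j ω ^ 2 ∂μ
      = ∫ ω, (∏ i ∈ Finset.range r, Y p i ω ^ κ i) * Y p r ω ^ 2 ∂μ := by
  classical
  set W : (Fin p → ℝ) → ℕ → ℝ := fun z n =>
    (if h : n < p then z ⟨n, h⟩ else 0) / Real.sqrt (∑ l, z l ^ 2) with hWdef
  set G : (Fin p → ℝ) → ℝ := fun z =>
    (∏ i ∈ Finset.range r, W z i ^ κ i) * W z r ^ 2 with hGdef
  have hWmeas : ∀ n, Measurable fun z => W z n := by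
    intro n
    apply Measurable.div
    · by_cases h : n < p
      · simp only [dif_pos h]; exact measurable_pi_apply _
      · simp only [dif_neg h]; exact measurable_const
    · exact (Finset.measurable_sum Finset.univ fun l _ =>
        (measurable_pi_apply l).pow_const 2).sqrt
  have hGmeas : Measurable G :=
    (Finset.measurable_prod _ fun i _ => (hWmeas i).pow_const (κ i)).mul
      ((hWmeas r).pow_const 2)
  -- generic pointwise identification
  have hpt : ∀ g : ℕ → ℕ, (∀ i, i < r → g i = i) →
      (∀ ω, ∑ n ∈ Finset.range p, Z (g n) ω ^ 2 = ∑ n ∈ Finset.range p, Z n ω ^ 2) →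
      ∀ ω, G (fun i : Fin p => Z (g (i : ℕ)) ω)
        = (∏ i ∈ Finset.range r, Y p i ω ^ κ i) * Y p (g r) ω ^ 2 := by
    intro g hfix hsum ω
    have hsz : ∑ l : Fin p, Z (g (l : ℕ)) ω ^ 2 = ∑ n ∈ Finset.range p, Z n ω ^ 2 := by
      rw [Fin.sum_univ_eq_sum_range (fun n => Z (g n) ω ^ 2) p]
      exact hsum ω
    have hWval : ∀ n, n < p → W (fun i : Fin p => Z (g (i : ℕ)) ω) n = Y p (g n) ω := by
      intro n hn
      rw [hWdef]
      simp only [dif_pos hn]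
      rw [hY, hsz]
    rw [hGdef]
    simp only
    rw [hWval r hrp]
    congr 1
    refine Finset.prod_congr rfl fun i hi => ?_
    have hir : i < r := Finset.mem_range.1 hi
    rw [hWval i (hir.trans hrp), hfix i hir]
  have hid : ∀ ω, G (fun i : Fin p => Z (id (i : ℕ)) ω)
      = (∏ i ∈ Finset.range r, Y p i ω ^ κ i) * Y p r ω ^ 2 :=
    hpt id (fun _ _ => rfl) (fun _ => rfl)
  have hswapval : ∀ ω, G (fun i : Fin p => Z (Equiv.swap r j (i : ℕ)) ω)
      = (∏ i ∈ Finset.range r, Y p i ω ^ κ i) * Y p j ω ^ 2 := by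
    have h := hpt (fun n => Equiv.swap r j n)
      (fun i hir => Equiv.swap_apply_of_ne_of_ne (by omega) (by omega))
      (fun ω => by
        refine Finset.sum_equiv (Equiv.swap r j) ?_ fun n _ => rfl
        intro n
        simp only [Finset.mem_range]
        rcases eq_or_ne n r with rfl | hnr
        · rw [Equiv.swap_apply_left]; omega
        rcases eq_or_ne n j with rfl | hnj
        · rw [Equiv.swap_apply_right]; omega
        · rw [Equiv.swap_apply_of_ne_of_ne hnr hnj])
    simpa [Equiv.swap_apply_left] using h
  have hVmeas : ∀ g : ℕ → ℕ, Measurable fun ω (i : Fin p) => Z (g (i : ℕ)) ω :=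
    fun g => measurable_pi_iff.mpr fun i => hmeas _
  have law1 := aux_law_iid μ Z hmeas hindep hident p id fun a b h => h
  have law2 := aux_law_iid μ Z hmeas hindep hident p (fun n => Equiv.swap r j n)
    (fun a b h => (Equiv.swap r j).injective h)
  calc ∫ ω, (∏ i ∈ Finset.range r, Y p i ω ^ κ i) * Y p j ω ^ 2 ∂μ
      = ∫ ω, G (fun i : Fin p => Z (Equiv.swap r j (i : ℕ)) ω) ∂μ := by
        exact integral_congr_ae (.of_forall fun ω => (hswapval ω).symm)
    _ = ∫ z, G z ∂(μ.map fun ω (i : Fin p) => Z (Equiv.swap r j (i : ℕ)) ω) :=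
        (integral_map (hVmeas _).aemeasurable hGmeas.aestronglyMeasurable).symm
    _ = ∫ z, G z ∂(μ.map fun ω (i : Fin p) => Z (id (i : ℕ)) ω) := by rw [law1, law2]
    _ = ∫ ω, G (fun i : Fin p => Z (id (i : ℕ)) ω) ∂μ :=
        integral_map (hVmeas _).aemeasurable hGmeas.aestronglyMeasurable
    _ = ∫ ω, (∏ i ∈ Finset.range r, Y p i ω ^ κ i) * Y p r ω ^ 2 ∂μ :=
        integral_congr_ae (.of_forall fun ω => hid ω)

/-- Induction step for odd-moment bounds of self-normalized variables: for a fixed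
i.i.d. centered sequence `Z` with `P(Z 0 = 0) = 0` and `E|Z|^(2m+3) < ∞`, with
`Y p i = Z i / sqrt (Z 0 ^2 + ... + Z (p-1) ^2)` and mixed moments
`M p κ = E[∏ i < r, (Y p i)^(κ i)]`, assuming Giné's bound (first exponent `1`) and
the inductive hypotheses (first exponent `2m+1`, with and without an extra factor
`(Y p r)²`), one gets `M p κ = o(p^{-r})` when the first exponent is `2m+3`. -/
theorem selfNormalized_odd_moment_induction_step
    {Ω : Type*} [MeasurableSpace Ω] (μ : Measure Ω) [IsProbabilityMeasure μ]
    (Z : ℕ → Ω → ℝ) (hmeas : ∀ i, Measurable (Z i))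
    (hindep : iIndepFun Z μ)
    (hident : ∀ i, IdentDistrib (Z i) (Z 0) μ μ)
    (hcent : ∫ ω, Z 0 ω ∂μ = 0)
    (hzero : μ {ω | Z 0 ω = 0} = 0)
    (m r : ℕ) (hr : 2 ≤ r)
    (hmom : Integrable (fun ω => |Z 0 ω| ^ (2 * m + 3)) μ)
    (Y : ℕ → ℕ → Ω → ℝ)
    (hY : ∀ p i ω, Y p i ω = Z i ω / Real.sqrt (∑ j ∈ Finset.range p, Z j ω ^ 2))
    (M : ℕ → (ℕ → ℕ) → ℝ)
    (hM : ∀ p κ, M p κ = ∫ ω, ∏ i ∈ Finset.range r, (Y p i ω) ^ κ i ∂μ)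
    (hGine : ∀ κ : ℕ → ℕ, κ 0 = 1 → (∀ i ∈ Finset.Ico 1 r, 0 < κ i) →
      Odd (∑ i ∈ Finset.Ico 1 r, κ i) →
      Tendsto (fun p : ℕ => (p : ℝ) ^ r * M p κ) atTop (nhds 0))
    (hind1 : ∀ κ : ℕ → ℕ, κ 0 = 2 * m + 1 → (∀ i ∈ Finset.Ico 1 r, 0 < κ i) →
      Odd (∑ i ∈ Finset.Ico 1 r, κ i) →
      Tendsto (fun p : ℕ => (p : ℝ) ^ r * M p κ) atTop (nhds 0))
    (hind2 : ∀ κ : ℕ → ℕ, κ 0 = 2 * m + 1 → (∀ i ∈ Finset.Ico 1 r, 0 < κ i) →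
      Odd (∑ i ∈ Finset.Ico 1 r, κ i) →
      Tendsto (fun p : ℕ => (p : ℝ) ^ (r + 1) *
          ∫ ω, (∏ i ∈ Finset.range r, (Y p i ω) ^ κ i) * (Y p r ω) ^ 2 ∂μ)
        atTop (nhds 0))
    (k : ℕ → ℕ) (hk0 : k 0 = 2 * m + 3)
    (hkpos : ∀ i ∈ Finset.Ico 1 r, 0 < k i)
    (hkodd : Odd (∑ i ∈ Finset.Ico 1 r, k i)) :
    Tendsto (fun p : ℕ => (p : ℝ) ^ r * M p k) atTop (nhds 0) := by
  classical
  -- basic properties of Y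
  have hYmeas : ∀ p i, Measurable (Y p i) := by
    intro p i
    have h : Y p i = fun ω => Z i ω / Real.sqrt (∑ j ∈ Finset.range p, Z j ω ^ 2) :=
      funext (hY p i)
    rw [h]
    exact (hmeas i).div (Finset.measurable_sum _ fun j _ => (hmeas j).pow_const 2).sqrt
  have hYle : ∀ p i ω, i < p → |Y p i ω| ≤ 1 := by
    intro p i ω hip
    rw [hY]
    set S := ∑ j ∈ Finset.range p, Z j ω ^ 2 with hSdef
    have hS0 : 0 ≤ S := Finset.sum_nonneg fun j _ => sq_nonneg _
    have hZS : Z i ω ^ 2 ≤ S :=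
      Finset.single_le_sum (fun j _ => sq_nonneg (Z j ω)) (Finset.mem_range.2 hip)
    rcases eq_or_lt_of_le hS0 with hS | hS
    · have hZ : Z i ω = 0 := by nlinarith [sq_nonneg (Z i ω)]
      simp [hZ]
    · rw [abs_div, abs_of_nonneg (Real.sqrt_nonneg S), div_le_one (Real.sqrt_pos.2 hS)]
      calc |Z i ω| = Real.sqrt (Z i ω ^ 2) := (Real.sqrt_sq_eq_abs _).symm
        _ ≤ Real.sqrt S := Real.sqrt_le_sqrt hZS
  have hprodle : ∀ (p : ℕ) (c : ℕ → ℕ) (ω : Ω), r ≤ p →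
      |∏ i ∈ Finset.range r, Y p i ω ^ c i| ≤ 1 := by
    intro p c ω hrp
    rw [Finset.abs_prod]
    refine Finset.prod_le_one (fun i _ => abs_nonneg _) fun i hi => ?_
    rw [abs_pow]
    exact pow_le_one₀ (abs_nonneg _) (hYle p i ω ((Finset.mem_range.1 hi).trans_le hrp))
  have hint : ∀ f : Ω → ℝ, Measurable f → (∀ ω, |f ω| ≤ 1) → Integrable f μ := by
    intro f hf hb
    refine (integrable_const (1 : ℝ)).mono' hf.aestronglyMeasurable (ae_of_all _ fun ω => ?_)
    simpa using hb ω
  -- a.e. sum of squares is 1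
  have hone : ∀ p : ℕ, 0 < p → ∀ᵐ ω ∂μ, ∑ l ∈ Finset.range p, Y p l ω ^ 2 = 1 := by
    intro p hp
    have hZ0 : ∀ᵐ ω ∂μ, Z 0 ω ≠ 0 := by
      rw [ae_iff]
      simpa using hzero
    filter_upwards [hZ0] with ω hω
    set S := ∑ l ∈ Finset.range p, Z l ω ^ 2 with hSdef
    have hSpos : 0 < S := Finset.sum_pos' (fun l _ => sq_nonneg _)
      ⟨0, Finset.mem_range.2 hp, pow_two_pos_of_ne_zero hω⟩
    have hsq : Real.sqrt S ^ 2 = S := Real.sq_sqrt hSpos.le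
    calc ∑ l ∈ Finset.range p, Y p l ω ^ 2
        = ∑ l ∈ Finset.range p, Z l ω ^ 2 / S := by
          refine Finset.sum_congr rfl fun l _ => ?_
          rw [hY, div_pow, hsq]
      _ = 1 := by rw [← Finset.sum_div, div_self hSpos.ne']
  -- the modified exponent vectors
  set k' : ℕ → ℕ := Function.update k 0 (2 * m + 1) with hk'def
  have hk'0 : k' 0 = 2 * m + 1 := Function.update_self 0 _ k
  have hk'eq : ∀ i, 1 ≤ i → k' i = k i := fun i hi =>
    Function.update_of_ne (by omega) _ k
  have hk'pos : ∀ i ∈ Finset.Ico 1 r, 0 < k' i := fun i hi => by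
    rw [hk'eq i (Finset.mem_Ico.1 hi).1]; exact hkpos i hi
  have hk'odd : Odd (∑ i ∈ Finset.Ico 1 r, k' i) := by
    have hsumk' : ∑ i ∈ Finset.Ico 1 r, k' i = ∑ i ∈ Finset.Ico 1 r, k i :=
      Finset.sum_congr rfl fun i hi => hk'eq i (Finset.mem_Ico.1 hi).1
    rw [hsumk']; exact hkodd
  set κf : ℕ → ℕ → ℕ := fun l => Function.update k' l (k l + 2) with hκfdef
  have hκ0 : ∀ l ∈ Finset.Ico 1 r, κf l 0 = 2 * m + 1 := by
    intro l hl
    have h0l : (0 : ℕ) ≠ l := by have := (Finset.mem_Ico.1 hl).1; omega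
    rw [hκfdef]
    simp only [Function.update_of_ne h0l]
    exact hk'0
  have hκpos : ∀ l ∈ Finset.Ico 1 r, ∀ i ∈ Finset.Ico 1 r, 0 < κf l i := by
    intro l hl i hi
    rcases eq_or_ne i l with rfl | hne
    · simp only [hκfdef, Function.update_self]; omega
    · simp only [hκfdef, Function.update_of_ne hne]; exact hk'pos i hi
  have hκodd : ∀ l ∈ Finset.Ico 1 r, Odd (∑ i ∈ Finset.Ico 1 r, κf l i) := by
    intro l hl
    have hsum : ∑ i ∈ Finset.Ico 1 r, κf l i = (∑ i ∈ Finset.Ico 1 r, k i) + 2 := by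
      rw [hκfdef]
      simp only
      rw [Finset.sum_update_of_mem hl]
      have h2 : ∑ i ∈ Finset.Ico 1 r \ {l}, k' i = ∑ i ∈ Finset.Ico 1 r \ {l}, k i :=
        Finset.sum_congr rfl fun i hi =>
          hk'eq i (Finset.mem_Ico.1 (Finset.mem_sdiff.1 hi).1).1
      rw [h2, ← Finset.sum_erase_add _ k (a := l) hl, Finset.erase_eq]
      ring
    rw [hsum]
    exact hkodd.add_even even_two
  -- the main per-p identity
  have main : ∀ p : ℕ, r < p →
      (p : ℝ) ^ r * M p k
        = (p : ℝ) ^ r * M p k'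
          - (∑ l ∈ Finset.Ico 1 r, (p : ℝ) ^ r * M p (κf l))
          - ((p : ℝ) - r) / p *
            ((p : ℝ) ^ (r + 1) *
              ∫ ω, (∏ i ∈ Finset.range r, Y p i ω ^ k' i) * Y p r ω ^ 2 ∂μ) := by
    intro p hp
    have hrp : r ≤ p := hp.le
    have hp0 : 0 < p := by omega
    have hPmeas : Measurable fun ω => ∏ i ∈ Finset.range r, Y p i ω ^ k' i :=
      Finset.measurable_prod _ fun i _ => (hYmeas p i).pow_const (k' i)
    have intk' : Integrable (fun ω => ∏ i ∈ Finset.range r, Y p i ω ^ k' i) μ :=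
      hint _ hPmeas fun ω => hprodle p k' ω hrp
    have intl : ∀ l, l < p →
        Integrable (fun ω => (∏ i ∈ Finset.range r, Y p i ω ^ k' i) * Y p l ω ^ 2) μ := by
      intro l hl
      refine hint _ (hPmeas.mul ((hYmeas p l).pow_const 2)) fun ω => ?_
      rw [abs_mul, abs_pow]
      exact mul_le_one₀ (hprodle p k' ω hrp)
        (pow_nonneg (abs_nonneg _) 2)
        (pow_le_one₀ (abs_nonneg _) (hYle p l ω hl))
    -- a.e. pointwise expansion
    have hae : ∀ᵐ ω ∂μ, (∏ i ∈ Finset.range r, Y p i ω ^ k i)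
        = (∏ i ∈ Finset.range r, Y p i ω ^ k' i)
          - ∑ l ∈ Finset.Ico 1 p, (∏ i ∈ Finset.range r, Y p i ω ^ k' i) * Y p l ω ^ 2 := by
      filter_upwards [hone p hp0] with ω h1
      have h0 : Y p 0 ω ^ 2 = 1 - ∑ l ∈ Finset.Ico 1 p, Y p l ω ^ 2 := by
        rw [Finset.sum_range_eq_add_Ico _ hp0] at h1
        linarith
      have hIco : ∏ i ∈ Finset.Ico 1 r, Y p i ω ^ k' i
          = ∏ i ∈ Finset.Ico 1 r, Y p i ω ^ k i :=
        Finset.prod_congr rfl fun i hi => by rw [hk'eq i (Finset.mem_Ico.1 hi).1]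
      have hPk' : (∏ i ∈ Finset.range r, Y p i ω ^ k' i)
          = Y p 0 ω ^ (2 * m + 1) * ∏ i ∈ Finset.Ico 1 r, Y p i ω ^ k i := by
        rw [Finset.prod_range_eq_mul_Ico _ (by omega : 0 < r), hk'0, hIco]
      have hsplit : 2 * m + 3 = (2 * m + 1) + 2 := by omega
      calc ∏ i ∈ Finset.range r, Y p i ω ^ k i
          = Y p 0 ω ^ k 0 * ∏ i ∈ Finset.Ico 1 r, Y p i ω ^ k i :=
            Finset.prod_range_eq_mul_Ico _ (by omega : 0 < r)
        _ = (Y p 0 ω ^ (2 * m + 1) * ∏ i ∈ Finset.Ico 1 r, Y p i ω ^ k i) * Y p 0 ω ^ 2 := by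
            rw [hk0, hsplit, pow_add]; ring
        _ = (∏ i ∈ Finset.range r, Y p i ω ^ k' i) * Y p 0 ω ^ 2 := by rw [hPk']
        _ = (∏ i ∈ Finset.range r, Y p i ω ^ k' i)
              * (1 - ∑ l ∈ Finset.Ico 1 p, Y p l ω ^ 2) := by rw [h0]
        _ = (∏ i ∈ Finset.range r, Y p i ω ^ k' i)
              - ∑ l ∈ Finset.Ico 1 p, (∏ i ∈ Finset.range r, Y p i ω ^ k' i) * Y p l ω ^ 2 := by
            rw [mul_sub, mul_one, Finset.mul_sum]
    -- integrate
    have step1 : M p k = M p k'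
        - ∑ l ∈ Finset.Ico 1 p,
            ∫ ω, (∏ i ∈ Finset.range r, Y p i ω ^ k' i) * Y p l ω ^ 2 ∂μ := by
      rw [hM p k, integral_congr_ae hae, integral_sub intk'
        (integrable_finset_sum _ fun l hl => intl l (Finset.mem_Ico.1 hl).2),
        integral_finset_sum _ fun l hl => intl l (Finset.mem_Ico.1 hl).2, hM p k']
    -- small-index integrals equal M of the bumped exponents
    have hsmall : ∀ l ∈ Finset.Ico 1 r,
        ∫ ω, (∏ i ∈ Finset.range r, Y p i ω ^ k' i) * Y p l ω ^ 2 ∂μ = M p (κf l) := by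
      intro l hl
      have hlr : l ∈ Finset.range r := Finset.mem_range.2 (Finset.mem_Ico.1 hl).2
      have hkl : k' l = k l := hk'eq l (Finset.mem_Ico.1 hl).1
      rw [hM p (κf l)]
      refine integral_congr_ae (.of_forall fun ω => ?_)
      show (∏ i ∈ Finset.range r, Y p i ω ^ k' i) * Y p l ω ^ 2
          = ∏ i ∈ Finset.range r, Y p i ω ^ κf l i
      have h1 : ∏ i ∈ Finset.range r, Y p i ω ^ κf l i
          = ∏ i ∈ Finset.range r,
              Function.update (fun i => Y p i ω ^ k' i) l (Y p l ω ^ (k l + 2)) i := by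
        refine Finset.prod_congr rfl fun i _ => ?_
        rcases eq_or_ne i l with rfl | hne
        · simp [hκfdef]
        · simp [hκfdef, Function.update_of_ne hne]
      have h2 : (∏ i ∈ Finset.range r, Y p i ω ^ k' i)
          = Y p l ω ^ k' l * ∏ i ∈ (Finset.range r).erase l, Y p i ω ^ k' i :=
        (Finset.mul_prod_erase _ _ hlr).symm
      rw [h2, h1, Finset.prod_update_of_mem hlr, hkl, pow_add, ← Finset.erase_eq]
      ring
    -- big-index integrals are all equal by exchangeability
    have hexch : ∀ l ∈ Finset.Ico r p,
        ∫ ω, (∏ i ∈ Finset.range r, Y p i ω ^ k' i) * Y p l ω ^ 2 ∂μ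
          = ∫ ω, (∏ i ∈ Finset.range r, Y p i ω ^ k' i) * Y p r ω ^ 2 ∂μ := fun l hl =>
      aux_exch μ Z hmeas hindep hident Y hY p r hp k' l
        (Finset.mem_Ico.1 hl).1 (Finset.mem_Ico.1 hl).2
    have hconst : ∑ l ∈ Finset.Ico r p,
        ∫ ω, (∏ i ∈ Finset.range r, Y p i ω ^ k' i) * Y p l ω ^ 2 ∂μ
          = ((p - r : ℕ) : ℝ) *
            ∫ ω, (∏ i ∈ Finset.range r, Y p i ω ^ k' i) * Y p r ω ^ 2 ∂μ := by
      rw [Finset.sum_congr rfl hexch, Finset.sum_const, Nat.card_Ico, nsmul_eq_mul]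
    have hMeq : M p k = M p k' - (∑ l ∈ Finset.Ico 1 r, M p (κf l))
        - ((p - r : ℕ) : ℝ) *
            ∫ ω, (∏ i ∈ Finset.range r, Y p i ω ^ k' i) * Y p r ω ^ 2 ∂μ := by
      rw [step1, ← Finset.sum_Ico_consecutive
        (f := fun l => ∫ ω, (∏ i ∈ Finset.range r, Y p i ω ^ k' i) * Y p l ω ^ 2 ∂μ)
        (by omega : 1 ≤ r) hrp, Finset.sum_congr rfl hsmall, hconst]
      ring
    have hcast : ((p - r : ℕ) : ℝ) = (p : ℝ) - r := by
      push_cast [Nat.cast_sub hrp]; ring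
    have hpne : (p : ℝ) ≠ 0 := Nat.cast_ne_zero.2 (by omega)
    have halg : ((p : ℝ) - r) / p *
        ((p : ℝ) ^ (r + 1) *
          ∫ ω, (∏ i ∈ Finset.range r, Y p i ω ^ k' i) * Y p r ω ^ 2 ∂μ)
        = (p : ℝ) ^ r * (((p : ℝ) - r) *
          ∫ ω, (∏ i ∈ Finset.range r, Y p i ω ^ k' i) * Y p r ω ^ 2 ∂μ) := by
      rw [pow_succ]
      field_simp
    rw [hMeq, hcast, halg, ← Finset.mul_sum]
    ring
  -- limits
  have h1 := hind1 k' hk'0 hk'pos hk'odd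
  have h2 : Tendsto (fun p : ℕ => ∑ l ∈ Finset.Ico 1 r, (p : ℝ) ^ r * M p (κf l))
      atTop (nhds 0) := by
    have := tendsto_finset_sum (Finset.Ico 1 r)
      (fun l hl => hind1 (κf l) (hκ0 l hl) (hκpos l hl) (hκodd l hl))
    simpa using this
  have h3 := hind2 k' hk'0 hk'pos hk'odd
  have h4 : Tendsto (fun p : ℕ => ((p : ℝ) - r) / p) atTop (nhds 1) := by
    have hbase : Tendsto (fun p : ℕ => 1 - (r : ℝ) / p) atTop (nhds 1) := by
      have := (tendsto_const_div_atTop_nhds_zero_nat (r : ℝ))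
      simpa using tendsto_const_nhds.sub this
    refine hbase.congr' ?_
    filter_upwards [eventually_gt_atTop 0] with p hp
    have hpne : (p : ℝ) ≠ 0 := Nat.cast_ne_zero.2 (by omega)
    field_simp
  have hlim : Tendsto (fun p : ℕ =>
      (p : ℝ) ^ r * M p k'
        - (∑ l ∈ Finset.Ico 1 r, (p : ℝ) ^ r * M p (κf l))
        - ((p : ℝ) - r) / p *
          ((p : ℝ) ^ (r + 1) *
            ∫ ω, (∏ i ∈ Finset.range r, Y p i ω ^ k' i) * Y p r ω ^ 2 ∂μ))
      atTop (nhds 0) := by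
    have := (h1.sub h2).sub (h4.mul h3)
    simpa using this
  refine hlim.congr' ?_
  filter_upwards [eventually_gt_atTop r] with p hp
  exact (main p hp).symm
end
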